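/- Let n, m ≥ 1, let p_A ∈ ℝ^n and p_B ∈ ℝ^m be probability vectors, let ε ∈ [0,1], and let λ̄ ∈ [0,1]^n, λ̃ ∈ [0,1]^m be scaling vectors with Λ_A := Σ_k λ̄_k p_A(k) > 0 and Λ_B := Σ_l λ̃_l p_B(l) > 0. Let η denote the uniform distribution on n·m outcomes. Then the vector q(a,b) := η + Σ_{k,l} (1−ε) λ̄_k λ̃_l p_A(k) p_B(l) (δ_{ka}δ_{lb} − η) equals (1−ε')·p̄_A(a)·p̃_B(b) + ε'·η, where p̄_A(k) = λ̄_k p_A(k)/Λ_A and p̃_B(l) = λ̃_l p_B(l)/Λ_B are probability vectors and ε' := 1 − (1−ε)Λ_A Λ_B satisfies ε ≤ ε' ≤ 1. In particular, q is again a noisy product (uncorrelated) distribution. -/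

import Mathlib

/-!
Write `w k = λ̄_k p_A(k)` and `v l = λ̃_l p_B(l)`, with totals `Λ_A`, `Λ_B`. Expanding the
contraction, the mass taken from the uniform part is `(1 - ε) Λ_A Λ_B`, so `q` is `η` plus
`(1 - ε) (w_a v_b - Λ_A Λ_B η)`, that is, the mixture of the product of the normalised
vectors `w / Λ_A`, `v / Λ_B` with `η` at weight `ε' = 1 - (1 - ε) Λ_A Λ_B`; and
`ε ≤ ε' ≤ 1` because `0 ≤ Λ_A Λ_B ≤ 1`.
-/

open Finset

section

variable {ι κ : Type*} [Fintype ι] [Fintype κ]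

lemma sum_mul_le_one_of_le_one {w p : ι → ℝ} (hp : ∀ k, 0 ≤ p k) (hpsum : ∑ k, p k = 1)
    (hw : ∀ k, w k ≤ 1) : ∑ k, w k * p k ≤ 1 :=
  hpsum ▸ sum_le_sum fun k _ => mul_le_of_le_one_left (hp k) (hw k)

lemma div_sum_nonneg {w : ι → ℝ} (hw : ∀ k, 0 ≤ w k) (k : ι) : 0 ≤ w k / ∑ k', w k' :=
  div_nonneg (hw k) (sum_nonneg fun k' _ => hw k')

lemma sum_div_sum_self {w : ι → ℝ} (h : ∑ k, w k ≠ 0) : ∑ k, w k / ∑ k', w k' = 1 := by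
  rw [← sum_div, div_self h]

lemma one_sub_mul_mul_mem_Icc {ε x y : ℝ} (hε : ε ≤ 1) (hx : x ∈ Set.Icc (0 : ℝ) 1)
    (hy : y ∈ Set.Icc (0 : ℝ) 1) : 1 - (1 - ε) * x * y ∈ Set.Icc ε 1 := by
  have hxy : x * y ∈ Set.Icc (0 : ℝ) 1 := unitInterval.mul_mem hx hy
  rw [mul_assoc]
  constructor <;> nlinarith [hxy.1, hxy.2]

lemma sum_sum_mul_mul_indicator_sub [DecidableEq ι] [DecidableEq κ] (f : ι → ℝ) (g : κ → ℝ)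
    (a : ι) (b : κ) (u : ℝ) :
    ∑ k, ∑ l, f k * g l * ((if k = a then 1 else 0) * (if l = b then 1 else 0) - u)
      = f a * g b - (∑ k, f k) * (∑ l, g l) * u := by
  simp only [mul_sub, sum_sub_distrib, mul_ite, mul_one, mul_zero, sum_ite_eq', mem_univ,
    if_true, sum_mul_sum, ← sum_mul]

lemma uniform_add_sum_contraction_eq_noisy_product [DecidableEq ι] [DecidableEq κ] (c u : ℝ)
    (lb pA : ι → ℝ) (lt pB : κ → ℝ) (hA : ∑ k, lb k * pA k ≠ 0) (hB : ∑ l, lt l * pB l ≠ 0)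
    (a : ι) (b : κ) :
    u + ∑ k, ∑ l, c * lb k * lt l * pA k * pB l *
        ((if k = a then (1 : ℝ) else 0) * (if l = b then (1 : ℝ) else 0) - u)
      = (1 - (1 - c * (∑ k, lb k * pA k) * (∑ l, lt l * pB l)))
          * (lb a * pA a / ∑ k', lb k' * pA k') * (lt b * pB b / ∑ l', lt l' * pB l')
        + (1 - c * (∑ k, lb k * pA k) * (∑ l, lt l * pB l)) * u := by
  have hsum := sum_sum_mul_mul_indicator_sub (fun k => c * (lb k * pA k)) (fun l => lt l * pB l)
    a b u
  simp only [← mul_sum] at hsum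
  have hterm : ∀ k l, c * lb k * lt l * pA k * pB l = c * (lb k * pA k) * (lt l * pB l) :=
    fun _ _ => by ring
  simp only [hterm, hsum]
  field_simp
  ring

end

theorem factorized_contraction_RNG_general (n m : ℕ)
    (pA : Fin n → ℝ) (pB : Fin m → ℝ)
    (hpA : ∀ k, 0 ≤ pA k) (hpAsum : ∑ k, pA k = 1)
    (hpB : ∀ l, 0 ≤ pB l) (hpBsum : ∑ l, pB l = 1)
    (ε : ℝ) (hε : ε ∈ Set.Icc (0 : ℝ) 1)
    (lb : Fin n → ℝ) (lt : Fin m → ℝ)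
    (hlb : ∀ k, lb k ∈ Set.Icc (0 : ℝ) 1) (hlt : ∀ l, lt l ∈ Set.Icc (0 : ℝ) 1)
    (hΛA : 0 < ∑ k, lb k * pA k) (hΛB : 0 < ∑ l, lt l * pB l) :
    (∀ k, 0 ≤ lb k * pA k / (∑ k', lb k' * pA k')) ∧
    (∑ k, lb k * pA k / (∑ k', lb k' * pA k')) = 1 ∧
    (∀ l, 0 ≤ lt l * pB l / (∑ l', lt l' * pB l')) ∧
    (∑ l, lt l * pB l / (∑ l', lt l' * pB l')) = 1 ∧
    ε ≤ 1 - (1 - ε) * (∑ k, lb k * pA k) * (∑ l, lt l * pB l) ∧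
    1 - (1 - ε) * (∑ k, lb k * pA k) * (∑ l, lt l * pB l) ≤ 1 ∧
    ∀ a : Fin n, ∀ b : Fin m,
      1 / ((n : ℝ) * m)
          + ∑ k, ∑ l, (1 - ε) * lb k * lt l * pA k * pB l *
            ((if k = a then (1 : ℝ) else 0) * (if l = b then (1 : ℝ) else 0)
              - 1 / ((n : ℝ) * m))
        = (1 - (1 - (1 - ε) * (∑ k, lb k * pA k) * (∑ l, lt l * pB l)))
            * (lb a * pA a / (∑ k', lb k' * pA k'))
            * (lt b * pB b / (∑ l', lt l' * pB l'))
          + (1 - (1 - ε) * (∑ k, lb k * pA k) * (∑ l, lt l * pB l))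
            * (1 / ((n : ℝ) * m)) := by
  have hΛA1 := sum_mul_le_one_of_le_one hpA hpAsum fun k => (hlb k).2
  have hΛB1 := sum_mul_le_one_of_le_one hpB hpBsum fun l => (hlt l).2
  obtain ⟨hε', hε'1⟩ := one_sub_mul_mul_mem_Icc hε.2 ⟨hΛA.le, hΛA1⟩ ⟨hΛB.le, hΛB1⟩
  exact ⟨div_sum_nonneg (fun k => mul_nonneg (hlb k).1 (hpA k)), sum_div_sum_self hΛA.ne',
    div_sum_nonneg (fun l => mul_nonneg (hlt l).1 (hpB l)), sum_div_sum_self hΛB.ne', hε', hε'1,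
    uniform_add_sum_contraction_eq_noisy_product _ _ lb pA lt pB hΛA.ne' hΛB.ne'⟩

/-- Factorized hyperbolic contractions are resource non-generating for total
correlations: the contracted distribution is again a noisy product
distribution with larger noise parameter. -/
theorem factorized_contraction_RNG (n m : ℕ) (hn : 1 ≤ n) (hm : 1 ≤ m)
    (pA : Fin n → ℝ) (pB : Fin m → ℝ)
    (hpA : ∀ k, 0 ≤ pA k) (hpAsum : ∑ k, pA k = 1)
    (hpB : ∀ l, 0 ≤ pB l) (hpBsum : ∑ l, pB l = 1)
    (ε : ℝ) (hε : ε ∈ Set.Icc (0 : ℝ) 1)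
    (lb : Fin n → ℝ) (lt : Fin m → ℝ)
    (hlb : ∀ k, lb k ∈ Set.Icc (0 : ℝ) 1) (hlt : ∀ l, lt l ∈ Set.Icc (0 : ℝ) 1)
    (hΛA : 0 < ∑ k, lb k * pA k) (hΛB : 0 < ∑ l, lt l * pB l) :
    (∀ k, 0 ≤ lb k * pA k / (∑ k', lb k' * pA k')) ∧
    (∑ k, lb k * pA k / (∑ k', lb k' * pA k')) = 1 ∧
    (∀ l, 0 ≤ lt l * pB l / (∑ l', lt l' * pB l')) ∧
    (∑ l, lt l * pB l / (∑ l', lt l' * pB l')) = 1 ∧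
    ε ≤ 1 - (1 - ε) * (∑ k, lb k * pA k) * (∑ l, lt l * pB l) ∧
    1 - (1 - ε) * (∑ k, lb k * pA k) * (∑ l, lt l * pB l) ≤ 1 ∧
    ∀ a : Fin n, ∀ b : Fin m,
      1 / ((n : ℝ) * m)
          + ∑ k, ∑ l, (1 - ε) * lb k * lt l * pA k * pB l *
            ((if k = a then (1 : ℝ) else 0) * (if l = b then (1 : ℝ) else 0)
              - 1 / ((n : ℝ) * m))
        = (1 - (1 - (1 - ε) * (∑ k, lb k * pA k) * (∑ l, lt l * pB l)))
            * (lb a * pA a / (∑ k', lb k' * pA k'))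
            * (lt b * pB b / (∑ l', lt l' * pB l'))
          + (1 - (1 - ε) * (∑ k, lb k * pA k) * (∑ l, lt l * pB l))
            * (1 / ((n : ℝ) * m)) :=
  factorized_contraction_RNG_general n m pA pB hpA hpAsum hpB hpBsum ε hε lb lt hlb hlt hΛA hΛB
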